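/- The deformation cone of the regular hexagon Z_{K_3} is a 4-dimensional cone with 6 facets and 5 rays; it is a cone over a bipyramid over a triangle. Its rays are generated by the three segments \Delta_a, \Delta_b, \Delta_c (for the edges a,b,c of K_3) and the two triangles \Delta_V and -\Delta_V. Consequently, every deformation P of Z_{K_3} can be written as P = \lambda_a \Delta_a + \lambda_b \Delta_b + \lambda_c \Delta_c \pm \lambda_V \Delta_V with \lambda_a, \lambda_b, \lambda_c, \lambda_V \ge 0, up to translation. -/

import Mathlib

open Pointwise

def IsPolytope {E : Type*} [AddCommGroup E] [Module ℝ E] (P : Set E) : Prop :=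
  ∃ S : Finset E, P = convexHull ℝ (S : Set E)

def IsDeformation {E : Type*} [AddCommGroup E] [Module ℝ E] (Q P : Set E) : Prop :=
  ∃ μ : ℝ, 0 < μ ∧ ∃ R : Set E, IsPolytope R ∧ μ • P = Q + R

/-- `A` lies on the ray generated by `S` in the deformation cone (modulo
translation): `A` is a translate of a nonnegative dilate of `S`. -/
def OnRay {E : Type*} [AddCommGroup E] [Module ℝ E] (S A : Set E) : Prop :=
  ∃ (μ : ℝ) (v : E), 0 ≤ μ ∧ A = {v} + μ • S

/-- `S` generates an extreme ray of the deformation cone of `P`. -/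
def IsExtremeRayGen {E : Type*} [AddCommGroup E] [Module ℝ E] (P S : Set E) : Prop :=
  IsPolytope S ∧ IsDeformation S P ∧ (¬ ∃ v : E, S = {v}) ∧
    ∀ A B : Set E, IsPolytope A → IsPolytope B →
      IsDeformation A P → IsDeformation B P →
        OnRay S (A + B) → OnRay S A ∧ OnRay S B

noncomputable def seg3 (i j : Fin 3) : Set (Fin 3 → ℝ) :=
  segment ℝ (Pi.single i 1) (Pi.single j 1)

/-- `Z_{K₃} = Δ₀₁ + Δ₀₂ + Δ₁₂`, a regular hexagon. -/
noncomputable def ZK3 : Set (Fin 3 → ℝ) := seg3 0 1 + seg3 0 2 + seg3 1 2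

/-- The triangle `Δ_V = conv(e₁, e₂, e₃)`. -/
noncomputable def ΔV : Set (Fin 3 → ℝ) :=
  convexHull ℝ {Pi.single 0 1, Pi.single 1 1, Pi.single 2 1}

namespace DefConeAux

noncomputable def ee (i : Fin 3) : Fin 3 → ℝ := Pi.single i 1

def IsMaxC (i : Fin 3) (X : Set (Fin 3 → ℝ)) (m : ℝ) : Prop :=
  (∀ x ∈ X, x i ≤ m) ∧ ∃ x ∈ X, x i = m

def IsMinC (i : Fin 3) (X : Set (Fin 3 → ℝ)) (m : ℝ) : Prop :=
  (∀ x ∈ X, m ≤ x i) ∧ ∃ x ∈ X, x i = m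

def IsSumC (X : Set (Fin 3 → ℝ)) (c : ℝ) : Prop :=
  X.Nonempty ∧ ∀ x ∈ X, ∑ i, x i = c

lemma IsMaxC.unique {i X m m'} (h : IsMaxC i X m) (h' : IsMaxC i X m') : m = m' := by
  obtain ⟨hb, x, hx, hxe⟩ := h; obtain ⟨hb', y, hy, hye⟩ := h'
  exact le_antisymm (hxe ▸ hb' x hx) (hye ▸ hb y hy)

lemma IsMinC.unique {i X m m'} (h : IsMinC i X m) (h' : IsMinC i X m') : m = m' := by
  obtain ⟨hb, x, hx, hxe⟩ := h; obtain ⟨hb', y, hy, hye⟩ := h'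
  exact le_antisymm (hye ▸ hb y hy) (hxe ▸ hb' x hx)

lemma IsSumC.unique {X c c'} (h : IsSumC X c) (h' : IsSumC X c') : c = c' := by
  obtain ⟨⟨x, hx⟩, hb⟩ := h
  exact (hb x hx).symm.trans (h'.2 x hx)

lemma IsMaxC.add {i X Y m n} (h : IsMaxC i X m) (h' : IsMaxC i Y n) :
    IsMaxC i (X + Y) (m + n) := by
  obtain ⟨hb, x, hx, hxe⟩ := h; obtain ⟨hb', y, hy, hye⟩ := h'
  constructor
  · rintro z ⟨p, hp, q, hq, rfl⟩
    exact add_le_add (hb p hp) (hb' q hq)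
  · exact ⟨x + y, Set.add_mem_add hx hy, by simp [hxe, hye]⟩

lemma IsMinC.add {i X Y m n} (h : IsMinC i X m) (h' : IsMinC i Y n) :
    IsMinC i (X + Y) (m + n) := by
  obtain ⟨hb, x, hx, hxe⟩ := h; obtain ⟨hb', y, hy, hye⟩ := h'
  constructor
  · rintro z ⟨p, hp, q, hq, rfl⟩
    exact add_le_add (hb p hp) (hb' q hq)
  · exact ⟨x + y, Set.add_mem_add hx hy, by simp [hxe, hye]⟩

lemma IsSumC.add {X Y c d} (h : IsSumC X c) (h' : IsSumC Y d) :
    IsSumC (X + Y) (c + d) := by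
  obtain ⟨⟨x, hx⟩, hb⟩ := h; obtain ⟨⟨y, hy⟩, hb'⟩ := h'
  refine ⟨⟨x + y, Set.add_mem_add hx hy⟩, ?_⟩
  rintro z ⟨p, hp, q, hq, rfl⟩
  simp [Finset.sum_add_distrib, hb p hp, hb' q hq]

lemma IsMaxC.smul {i X m} {a : ℝ} (ha : 0 ≤ a) (h : IsMaxC i X m) :
    IsMaxC i (a • X) (a * m) := by
  obtain ⟨hb, x, hx, hxe⟩ := h
  constructor
  · rintro z ⟨p, hp, rfl⟩
    simpa using mul_le_mul_of_nonneg_left (hb p hp) ha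
  · exact ⟨a • x, Set.smul_mem_smul_set hx, by simp [hxe]⟩

lemma IsMinC.smul {i X m} {a : ℝ} (ha : 0 ≤ a) (h : IsMinC i X m) :
    IsMinC i (a • X) (a * m) := by
  obtain ⟨hb, x, hx, hxe⟩ := h
  constructor
  · rintro z ⟨p, hp, rfl⟩
    simpa using mul_le_mul_of_nonneg_left (hb p hp) ha
  · exact ⟨a • x, Set.smul_mem_smul_set hx, by simp [hxe]⟩

lemma IsSumC.smul {X c} {a : ℝ} (h : IsSumC X c) : IsSumC (a • X) (a * c) := by
  obtain ⟨⟨x, hx⟩, hb⟩ := h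
  refine ⟨⟨a • x, Set.smul_mem_smul_set hx⟩, ?_⟩
  rintro z ⟨p, hp, rfl⟩
  have : ∀ i, (a • p) i = a * p i := fun i => rfl
  simp only [this, ← Finset.mul_sum, hb p hp]

lemma isMaxC_singleton (i : Fin 3) (v : Fin 3 → ℝ) : IsMaxC i {v} (v i) :=
  ⟨by rintro x rfl; exact le_rfl, v, rfl, rfl⟩

lemma isMinC_singleton (i : Fin 3) (v : Fin 3 → ℝ) : IsMinC i {v} (v i) :=
  ⟨by rintro x rfl; exact le_rfl, v, rfl, rfl⟩

lemma isSumC_singleton (v : Fin 3 → ℝ) : IsSumC {v} (∑ i, v i) :=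
  ⟨⟨v, rfl⟩, by rintro x rfl; rfl⟩

lemma IsMinC.neg {i X m} (h : IsMinC i X m) : IsMaxC i (-X) (-m) := by
  obtain ⟨hb, x, hx, hxe⟩ := h
  constructor
  · rintro z hz
    have := hb (-z) hz
    simp only [Pi.neg_apply] at this ⊢
    linarith
  · exact ⟨-x, by simpa using hx, by simp [hxe]⟩

lemma IsMaxC.neg {i X m} (h : IsMaxC i X m) : IsMinC i (-X) (-m) := by
  obtain ⟨hb, x, hx, hxe⟩ := h
  constructor
  · rintro z hz
    have := hb (-z) hz
    simp only [Pi.neg_apply] at this ⊢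
    linarith
  · exact ⟨-x, by simpa using hx, by simp [hxe]⟩

lemma IsSumC.neg {X c} (h : IsSumC X c) : IsSumC (-X) (-c) := by
  obtain ⟨⟨x, hx⟩, hb⟩ := h
  refine ⟨⟨-x, by simpa using hx⟩, ?_⟩
  rintro z hz
  have := hb (-z) hz
  simp only [Pi.neg_apply] at this ⊢
  rw [Finset.sum_neg_distrib] at *
  linarith

lemma proj_linear (i : Fin 3) : IsLinearMap ℝ (fun x : Fin 3 → ℝ => x i) :=
  ⟨fun _ _ => rfl, fun _ _ => rfl⟩

lemma sumf_linear : IsLinearMap ℝ (fun x : Fin 3 → ℝ => ∑ i, x i) := by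
  constructor
  · intro x y; simp [Finset.sum_add_distrib]
  · intro c x
    have : ∀ i, (c • x) i = c * x i := fun i => rfl
    simp [this, Finset.mul_sum]

lemma isMaxC_hull {S : Set (Fin 3 → ℝ)} {i : Fin 3} {m : ℝ}
    (hb : ∀ x ∈ S, x i ≤ m) (ha : ∃ x ∈ S, x i = m) :
    IsMaxC i (convexHull ℝ S) m := by
  obtain ⟨x, hx, hxe⟩ := ha
  refine ⟨fun y hy => ?_, x, subset_convexHull ℝ S hx, hxe⟩
  exact convexHull_min hb (convex_halfSpace_le (proj_linear i) m) hy

lemma isMinC_hull {S : Set (Fin 3 → ℝ)} {i : Fin 3} {m : ℝ}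
    (hb : ∀ x ∈ S, m ≤ x i) (ha : ∃ x ∈ S, x i = m) :
    IsMinC i (convexHull ℝ S) m := by
  obtain ⟨x, hx, hxe⟩ := ha
  refine ⟨fun y hy => ?_, x, subset_convexHull ℝ S hx, hxe⟩
  exact convexHull_min hb (convex_halfSpace_ge (proj_linear i) m) hy

lemma isSumC_hull {S : Set (Fin 3 → ℝ)} {c : ℝ} (hne : S.Nonempty)
    (hb : ∀ x ∈ S, ∑ i, x i = c) :
    IsSumC (convexHull ℝ S) c := by
  refine ⟨hne.mono (subset_convexHull ℝ S), fun y hy => ?_⟩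
  exact convexHull_min hb (convex_hyperplane sumf_linear c) hy

lemma seg3_eq_hull (i j : Fin 3) : seg3 i j = convexHull ℝ {ee i, ee j} :=
  (convexHull_pair _ _).symm

lemma ee_apply (i m : Fin 3) : ee i m = if m = i then 1 else 0 := by
  simp [ee, Pi.single_apply]

lemma isMaxC_seg3 (i j m : Fin 3) (hij : i ≠ j) :
    IsMaxC m (seg3 i j) (if m = i ∨ m = j then 1 else 0) := by
  rw [seg3_eq_hull]
  apply isMaxC_hull
  · rintro x (rfl | rfl) <;> rw [ee_apply] <;> split_ifs <;> simp_all
  · by_cases h : m = i ∨ m = j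
    · rcases h with rfl | rfl
      · exact ⟨ee m, Set.mem_insert _ _, by simp [ee_apply]⟩
      · exact ⟨ee m, Set.mem_insert_of_mem _ rfl, by simp [ee_apply]⟩
    · push_neg at h
      exact ⟨ee i, Set.mem_insert _ _, by simp [ee_apply, h.1, h.2]⟩

lemma isMinC_seg3 (i j m : Fin 3) (hij : i ≠ j) :
    IsMinC m (seg3 i j) 0 := by
  rw [seg3_eq_hull]
  apply isMinC_hull
  · rintro x (rfl | rfl) <;> rw [ee_apply] <;> split_ifs <;> norm_num
  · by_cases h : m = i
    · exact ⟨ee j, Set.mem_insert_of_mem _ rfl, by rw [ee_apply, if_neg (h ▸ Ne.symm hij ∘ Eq.symm)]⟩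
    · exact ⟨ee i, Set.mem_insert _ _, by rw [ee_apply, if_neg h]⟩

lemma isSumC_seg3 (i j : Fin 3) : IsSumC (seg3 i j) 1 := by
  rw [seg3_eq_hull]
  apply isSumC_hull ⟨ee i, Set.mem_insert _ _⟩
  rintro x (rfl | rfl) <;> simp [ee]

lemma ΔV_gens : ΔV = convexHull ℝ {ee 0, ee 1, ee 2} := rfl

lemma isMaxC_ΔV (m : Fin 3) : IsMaxC m ΔV 1 := by
  rw [ΔV_gens]
  apply isMaxC_hull
  · rintro x (rfl | rfl | rfl) <;> rw [ee_apply] <;> split_ifs <;> norm_num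
  · exact ⟨ee m, by fin_cases m <;> simp, by simp [ee_apply]⟩

lemma isMinC_ΔV (m : Fin 3) : IsMinC m ΔV 0 := by
  rw [ΔV_gens]
  apply isMinC_hull
  · rintro x (rfl | rfl | rfl) <;> rw [ee_apply] <;> split_ifs <;> norm_num
  · fin_cases m
    · exact ⟨ee 1, by simp, by simp [ee_apply, Fin.ext_iff]⟩
    · exact ⟨ee 0, by simp, by simp [ee_apply, Fin.ext_iff]⟩
    · exact ⟨ee 0, by simp, by simp [ee_apply, Fin.ext_iff]⟩

lemma isSumC_ΔV : IsSumC ΔV 1 := by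
  rw [ΔV_gens]
  apply isSumC_hull ⟨ee 0, by simp⟩
  rintro x (rfl | rfl | rfl) <;> simp [ee]

lemma polytope_convex {P : Set (Fin 3 → ℝ)} (h : IsPolytope P) : Convex ℝ P := by
  obtain ⟨S, rfl⟩ := h; exact convex_convexHull ℝ _

lemma polytope_isClosed {P : Set (Fin 3 → ℝ)} (h : IsPolytope P) : IsClosed P := by
  obtain ⟨S, rfl⟩ := h
  exact (S.finite_toSet.isCompact_convexHull ℝ).isClosed

lemma _root_.IsPolytope.add {E : Type*} [AddCommGroup E] [Module ℝ E] {P Q : Set E}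
    (h : IsPolytope P) (h' : IsPolytope Q) : IsPolytope (P + Q) := by
  obtain ⟨S, rfl⟩ := h; obtain ⟨T, rfl⟩ := h'
  classical
  exact ⟨S + T, by rw [Finset.coe_add, convexHull_add]⟩

lemma _root_.IsPolytope.smul {E : Type*} [AddCommGroup E] [Module ℝ E] {P : Set E} (a : ℝ)
    (h : IsPolytope P) : IsPolytope (a • P) := by
  obtain ⟨S, rfl⟩ := h
  classical
  refine ⟨S.image (a • ·), ?_⟩
  rw [Finset.coe_image, Set.image_smul, convexHull_smul]

lemma _root_.IsPolytope.neg {E : Type*} [AddCommGroup E] [Module ℝ E] {P : Set E}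
    (h : IsPolytope P) : IsPolytope (-P) := by
  obtain ⟨S, rfl⟩ := h
  classical
  refine ⟨S.image (fun x => -x), ?_⟩
  rw [Finset.coe_image, Set.image_neg_eq_neg, convexHull_neg]

lemma _root_.IsPolytope.singleton {E : Type*} [AddCommGroup E] [Module ℝ E] (v : E) :
    IsPolytope ({v} : Set E) := ⟨{v}, by simp⟩

lemma exists_isMaxC {P : Set (Fin 3 → ℝ)} (h : IsPolytope P) (hne : P.Nonempty) (i : Fin 3) :
    ∃ m, IsMaxC i P m := by
  obtain ⟨S, rfl⟩ := h
  have hS : S.Nonempty := by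
    rcases hne with ⟨x, hx⟩
    by_contra h
    rw [Finset.not_nonempty_iff_eq_empty.mp h] at hx
    simp at hx
  refine ⟨S.sup' hS (· i), ?_, ?_⟩
  · intro x hx
    refine convexHull_min ?_ (convex_halfSpace_le (proj_linear i) _) hx
    intro s hs
    exact Finset.le_sup' (· i) hs
  · obtain ⟨s, hs, hse⟩ := Finset.exists_mem_eq_sup' hS (· i)
    exact ⟨s, subset_convexHull ℝ _ hs, hse.symm⟩

lemma exists_isMinC {P : Set (Fin 3 → ℝ)} (h : IsPolytope P) (hne : P.Nonempty) (i : Fin 3) :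
    ∃ m, IsMinC i P m := by
  obtain ⟨S, rfl⟩ := h
  have hS : S.Nonempty := by
    rcases hne with ⟨x, hx⟩
    by_contra h
    rw [Finset.not_nonempty_iff_eq_empty.mp h] at hx
    simp at hx
  refine ⟨S.inf' hS (· i), ?_, ?_⟩
  · intro x hx
    refine convexHull_min ?_ (convex_halfSpace_ge (proj_linear i) _) hx
    intro s hs
    exact Finset.inf'_le (· i) hs
  · obtain ⟨s, hs, hse⟩ := Finset.exists_mem_eq_inf' hS (· i)
    exact ⟨s, subset_convexHull ℝ _ hs, hse.symm⟩

noncomputable def one3 : Fin 3 → ℝ := ee 0 + ee 1 + ee 2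

lemma seg3_def' (i j : Fin 3) : seg3 i j = segment ℝ (ee i) (ee j) := rfl

lemma sum3 (y : Fin 3 → ℝ) {i j k : Fin 3} (hij : i ≠ j) (hik : i ≠ k) (hjk : j ≠ k) :
    ∑ m, y m = y i + y j + y k := by
  fin_cases i <;> fin_cases j <;> fin_cases k <;>
    simp_all [Fin.sum_univ_three] <;> ring

lemma corner_mem_ZK3 {i k : Fin 3} (hik : i ≠ k) :
    ∃ w ∈ ZK3, w i = 2 ∧ w k = 0 := by
  have l01 : ee 0 ∈ seg3 0 1 := left_mem_segment ℝ _ _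
  have r01 : ee 1 ∈ seg3 0 1 := right_mem_segment ℝ _ _
  have l02 : ee 0 ∈ seg3 0 2 := left_mem_segment ℝ _ _
  have r02 : ee 2 ∈ seg3 0 2 := right_mem_segment ℝ _ _
  have l12 : ee 1 ∈ seg3 1 2 := left_mem_segment ℝ _ _
  have r12 : ee 2 ∈ seg3 1 2 := right_mem_segment ℝ _ _
  fin_cases i <;> fin_cases k <;> simp_all
  · exact ⟨ee 0 + ee 0 + ee 2, Set.add_mem_add (Set.add_mem_add l01 l02) r12,
      by simp [ee, Pi.single_apply]; norm_num, by simp [ee, Pi.single_apply]⟩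
  · exact ⟨ee 0 + ee 0 + ee 1, Set.add_mem_add (Set.add_mem_add l01 l02) l12,
      by simp [ee, Pi.single_apply]; norm_num, by simp [ee, Pi.single_apply]⟩
  · exact ⟨ee 1 + ee 2 + ee 1, Set.add_mem_add (Set.add_mem_add r01 r02) l12,
      by simp [ee, Pi.single_apply]; norm_num, by simp [ee, Pi.single_apply]⟩
  · exact ⟨ee 1 + ee 0 + ee 1, Set.add_mem_add (Set.add_mem_add r01 l02) l12,
      by simp [ee, Pi.single_apply]; norm_num, by simp [ee, Pi.single_apply]⟩
  · exact ⟨ee 1 + ee 2 + ee 2, Set.add_mem_add (Set.add_mem_add r01 r02) r12,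
      by simp [ee, Pi.single_apply]; norm_num, by simp [ee, Pi.single_apply]⟩
  · exact ⟨ee 0 + ee 2 + ee 2, Set.add_mem_add (Set.add_mem_add l01 r02) r12,
      by simp [ee, Pi.single_apply]; norm_num, by simp [ee, Pi.single_apply]⟩

lemma ZK3_nonempty : ZK3.Nonempty :=
  ⟨ee 0 + ee 0 + ee 1, Set.add_mem_add
    (Set.add_mem_add (left_mem_segment ℝ _ _) (left_mem_segment ℝ _ _))
    (left_mem_segment ℝ _ _)⟩

lemma hexid : ΔV + (-ΔV) + {one3} = ZK3 := by
  have hV : ΔV = convexHull ℝ {ee 0, ee 1, ee 2} := rfl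
  have h1 : ΔV + (-ΔV) + {one3} =
      convexHull ℝ (({ee 0, ee 1, ee 2} : Set (Fin 3 → ℝ)) + (-{ee 0, ee 1, ee 2}) + {one3}) := by
    rw [convexHull_add, convexHull_add, convexHull_neg, convexHull_singleton, hV]
  have h2 : ZK3 = convexHull ℝ
      (({ee 0, ee 1} : Set (Fin 3 → ℝ)) + {ee 0, ee 2} + {ee 1, ee 2}) := by
    rw [convexHull_add, convexHull_add, convexHull_pair, convexHull_pair, convexHull_pair]
    rfl
  rw [h1, h2]
  apply Set.Subset.antisymm
  · apply convexHull_min _ (convex_convexHull ℝ _)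
    rintro x ⟨y, ⟨p, hp, q, hq, rfl⟩, o, ho, rfl⟩
    rw [Set.mem_neg] at hq
    rcases ho with rfl
    apply subset_convexHull
    have key : ∀ z ∈ ({ee 0, ee 1} : Set (Fin 3 → ℝ)) + {ee 0, ee 2} + {ee 1, ee 2},
        z ∈ ({ee 0, ee 1} : Set (Fin 3 → ℝ)) + {ee 0, ee 2} + {ee 1, ee 2} := fun z h => h
    rcases hp with rfl | rfl | rfl <;> rcases hq with h | h | h <;>
      rw [show q = -(-q) from (neg_neg q).symm, h] <;> beta_reduce <;>
      [ (rw [show ee 0 + -ee 0 + one3 = ee 0 + ee 2 + ee 1 from by unfold one3; abel]);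
        (rw [show ee 0 + -ee 1 + one3 = ee 0 + ee 0 + ee 2 from by unfold one3; abel]);
        (rw [show ee 0 + -ee 2 + one3 = ee 0 + ee 0 + ee 1 from by unfold one3; abel]);
        (rw [show ee 1 + -ee 0 + one3 = ee 1 + ee 2 + ee 1 from by unfold one3; abel]);
        (rw [show ee 1 + -ee 1 + one3 = ee 0 + ee 2 + ee 1 from by unfold one3; abel]);
        (rw [show ee 1 + -ee 2 + one3 = ee 1 + ee 0 + ee 1 from by unfold one3; abel]);
        (rw [show ee 2 + -ee 0 + one3 = ee 1 + ee 2 + ee 2 from by unfold one3; abel]);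
        (rw [show ee 2 + -ee 1 + one3 = ee 0 + ee 2 + ee 2 from by unfold one3; abel]);
        (rw [show ee 2 + -ee 2 + one3 = ee 0 + ee 2 + ee 1 from by unfold one3; abel])] <;>
      exact Set.add_mem_add (Set.add_mem_add (by simp) (by simp)) (by simp)
  · apply convexHull_min _ (convex_convexHull ℝ _)
    rintro x ⟨y, ⟨p, hp, q, hq, rfl⟩, r, hr, rfl⟩
    apply subset_convexHull
    have m1 : ∀ a : Fin 3, ee a ∈ ({ee 0, ee 1, ee 2} : Set (Fin 3 → ℝ)) := by
      intro a; fin_cases a <;> simp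
    have m2 : ∀ a : Fin 3, -ee a ∈ -({ee 0, ee 1, ee 2} : Set (Fin 3 → ℝ)) := by
      intro a; rw [Set.mem_neg]; simpa using m1 a
    rcases hp with rfl | rfl <;> rcases hq with rfl | rfl <;> rcases hr with rfl | rfl <;> beta_reduce <;>
      [ (rw [show ee 0 + ee 0 + ee 1 = ee 0 + -ee 2 + one3 from by unfold one3; abel]);
        (rw [show ee 0 + ee 0 + ee 2 = ee 0 + -ee 1 + one3 from by unfold one3; abel]);
        (rw [show ee 0 + ee 2 + ee 1 = ee 0 + -ee 0 + one3 from by unfold one3; abel]);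
        (rw [show ee 0 + ee 2 + ee 2 = ee 2 + -ee 1 + one3 from by unfold one3; abel]);
        (rw [show ee 1 + ee 0 + ee 1 = ee 1 + -ee 2 + one3 from by unfold one3; abel]);
        (rw [show ee 1 + ee 0 + ee 2 = ee 0 + -ee 0 + one3 from by unfold one3; abel]);
        (rw [show ee 1 + ee 2 + ee 1 = ee 1 + -ee 0 + one3 from by unfold one3; abel]);
        (rw [show ee 1 + ee 2 + ee 2 = ee 2 + -ee 0 + one3 from by unfold one3; abel])] <;>
      exact Set.add_mem_add (Set.add_mem_add (m1 _) (m2 _)) rfl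

lemma isMaxC_ZK3 (m : Fin 3) : IsMaxC m ZK3 2 := by
  have h := ((isMaxC_seg3 0 1 m (by decide)).add (isMaxC_seg3 0 2 m (by decide))).add
    (isMaxC_seg3 1 2 m (by decide))
  have hz : ZK3 = seg3 0 1 + seg3 0 2 + seg3 1 2 := rfl
  rw [hz]
  convert h using 2 <;> fin_cases m <;> norm_num [Fin.ext_iff]

lemma isMinC_ZK3 (m : Fin 3) : IsMinC m ZK3 0 := by
  have h := ((isMinC_seg3 0 1 m (by decide)).add (isMinC_seg3 0 2 m (by decide))).add
    (isMinC_seg3 1 2 m (by decide))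
  have hz : ZK3 = seg3 0 1 + seg3 0 2 + seg3 1 2 := rfl
  rw [hz]
  simpa using h

lemma isSumC_ZK3 : IsSumC ZK3 3 := by
  have h := ((isSumC_seg3 0 1).add (isSumC_seg3 0 2)).add (isSumC_seg3 1 2)
  have hz : ZK3 = seg3 0 1 + seg3 0 2 + seg3 1 2 := rfl
  rw [hz]
  convert h using 2
  norm_num

lemma f_rep (f : (Fin 3 → ℝ) →L[ℝ] ℝ) (y : Fin 3 → ℝ) : f y = ∑ i, y i * f (ee i) := by
  have hy : y = ∑ i, y i • ee i := by
    funext j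
    simp [ee, Finset.sum_apply, Pi.single_apply]
  conv_lhs => rw [hy]
  simp [mul_comm]

lemma rep_of_summand {P R : Set (Fin 3 → ℝ)} {μ : ℝ} (hμ : 0 < μ)
    (hP : IsPolytope P) (hR : IsPolytope R)
    (hsum : μ • ZK3 = P + R)
    {a b : Fin 3 → ℝ} {c : ℝ}
    (ha : ∀ i, IsMinC i P (a i)) (hb : ∀ i, IsMaxC i P (b i)) (hc : IsSumC P c) :
    P = {x | (∑ i, x i) = c ∧ ∀ i, a i ≤ x i ∧ x i ≤ b i} := by
  have hRne : R.Nonempty := by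
    obtain ⟨z, hz⟩ := ZK3_nonempty.smul_set (a := μ)
    rw [hsum] at hz
    obtain ⟨p, _, r, hr, _⟩ := hz
    exact ⟨r, hr⟩
  choose aR haR using fun i => exists_isMinC hR hRne i
  choose bR hbR using fun i => exists_isMaxC hR hRne i
  have key : ∀ i k : Fin 3, i ≠ k → ∃ p ∈ P, p i = b i ∧ p k = a k := by
    intro i k hik
    obtain ⟨w', hw', hwi, hwk⟩ := corner_mem_ZK3 hik
    have hwmem : μ • w' ∈ P + R := by rw [← hsum]; exact Set.smul_mem_smul_set hw'
    obtain ⟨p, hp, r, hr, hpr⟩ := hwmem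
    have hmaxi : b i + bR i = μ * 2 := by
      refine IsMaxC.unique ((hb i).add (hbR i)) ?_
      rw [← hsum]
      exact (isMaxC_ZK3 i).smul hμ.le
    have hmink : a k + aR k = μ * 0 := by
      refine IsMinC.unique ((ha k).add (haR k)) ?_
      rw [← hsum]
      exact (isMinC_ZK3 k).smul hμ.le
    have hpri : p i + r i = μ * 2 := by
      have : (μ • w') i = μ * w' i := rfl
      rw [← hpr] at this
      simpa [hwi] using this
    have hprk : p k + r k = μ * 0 := by
      have : (μ • w') k = μ * w' k := rfl
      rw [← hpr] at this
      simpa [hwk] using this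
    refine ⟨p, hp, ?_, ?_⟩
    · have h1 := (hb i).1 p hp
      have h2 := (hbR i).1 r hr
      linarith
    · have h1 := (ha k).1 p hp
      have h2 := (haR k).1 r hr
      linarith
  apply Set.Subset.antisymm
  · intro x hx
    exact ⟨hc.2 x hx, fun i => ⟨(ha i).1 x hx, (hb i).1 x hx⟩⟩
  · rintro x ⟨hxc, hxb⟩
    by_contra hx
    obtain ⟨f, u, hfu, hux⟩ :=
      geometric_hahn_banach_closed_point (polytope_convex hP) (polytope_isClosed hP) hx
    set g : Fin 3 → ℝ := fun i => f (ee i) with hg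
    have horder : ∃ i j k : Fin 3, i ≠ j ∧ i ≠ k ∧ j ≠ k ∧ g j ≤ g i ∧ g k ≤ g j := by
      rcases le_total (g 0) (g 1) with h01 | h01 <;>
        rcases le_total (g 0) (g 2) with h02 | h02 <;>
          rcases le_total (g 1) (g 2) with h12 | h12
      · exact ⟨2, 1, 0, by decide, by decide, by decide, h12, h01⟩
      · exact ⟨1, 2, 0, by decide, by decide, by decide, h12, h02⟩
      · exact ⟨1, 0, 2, by decide, by decide, by decide, h01, h02⟩
      · exact ⟨1, 0, 2, by decide, by decide, by decide, h01, h02⟩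
      · exact ⟨2, 0, 1, by decide, by decide, by decide, h02, h01⟩
      · exact ⟨2, 0, 1, by decide, by decide, by decide, h02, h01⟩
      · exact ⟨0, 2, 1, by decide, by decide, by decide, h02, h12⟩
      · exact ⟨0, 1, 2, by decide, by decide, by decide, h01, h12⟩
    obtain ⟨i, j, k, hij, hik, hjk, hgij, hgjk⟩ := horder
    obtain ⟨p, hp, hpi, hpk⟩ := key i k hik
    have hxsum : x i + x j + x k = c := by rw [← sum3 x hij hik hjk]; exact hxc
    have hpsum : p i + p j + p k = c := by rw [← sum3 p hij hik hjk]; exact hc.2 p hp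
    have hA : 0 ≤ p i - x i := by have := (hxb i).2; linarith [hpi ▸ this]
    have hC : 0 ≤ x k - p k := by have := (hxb k).1; linarith [hpk ▸ this]
    have t1 : 0 ≤ (g i - g j) * (p i - x i) := mul_nonneg (by linarith) hA
    have t2 : 0 ≤ (g j - g k) * (x k - p k) := mul_nonneg (by linarith) hC
    have hfx : f x ≤ f p := by
      rw [f_rep f x, f_rep f p,
        sum3 (fun m => x m * f (ee m)) hij hik hjk,
        sum3 (fun m => p m * f (ee m)) hij hik hjk]
      show x i * g i + x j * g j + x k * g k ≤ p i * g i + p j * g j + p k * g k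
      have hz : (p i - x i) + (p j - x j) + (p k - x k) = 0 := by linarith
      have t3 : g j * ((p i - x i) + (p j - x j) + (p k - x k)) = 0 := by rw [hz]; ring
      nlinarith [t1, t2, t3]
    have := hfu p hp
    linarith

lemma seg3_ne (i j : Fin 3) : (seg3 i j).Nonempty := ⟨_, left_mem_segment ℝ _ _⟩

lemma ΔV_ne : ΔV.Nonempty := ⟨_, subset_convexHull ℝ _ (Set.mem_insert _ _)⟩

lemma negΔV_ne : (-ΔV).Nonempty := ΔV_ne.neg

lemma addz (X Y : Set (Fin 3 → ℝ)) (hY : Y.Nonempty) : X + (0 : ℝ) • Y = X := by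
  rw [Set.zero_smul_set hY]
  try rw [Set.singleton_zero]
  exact add_zero X

lemma polytope_seg3 (i j : Fin 3) : IsPolytope (seg3 i j) := by
  classical
  refine ⟨{Pi.single i 1, Pi.single j 1}, ?_⟩
  have hc : ((({Pi.single i 1, Pi.single j 1} : Finset (Fin 3 → ℝ))) : Set (Fin 3 → ℝ)) =
      {Pi.single i 1, Pi.single j 1} := by simp
  rw [hc, convexHull_pair]
  rfl

lemma polytope_ΔV : IsPolytope ΔV := by
  classical
  refine ⟨{Pi.single 0 1, Pi.single 1 1, Pi.single 2 1}, ?_⟩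
  rw [ΔV]
  congr 1
  simp

noncomputable def combo (v : Fin 3 → ℝ) (la lb lc lV : ℝ) (T : Set (Fin 3 → ℝ)) :
    Set (Fin 3 → ℝ) :=
  {v} + la • seg3 0 1 + lb • seg3 0 2 + lc • seg3 1 2 + lV • T

lemma combo_polytope (v : Fin 3 → ℝ) (la lb lc lV : ℝ) {T : Set (Fin 3 → ℝ)}
    (hT : IsPolytope T) : IsPolytope (combo v la lb lc lV T) :=
  ((((IsPolytope.singleton v).add ((polytope_seg3 0 1).smul la)).add
    ((polytope_seg3 0 2).smul lb)).add ((polytope_seg3 1 2).smul lc)).add (hT.smul lV)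

lemma combo_minC_pos {la lb lc lV : ℝ} (v : Fin 3 → ℝ)
    (h0 : 0 ≤ la) (h1 : 0 ≤ lb) (h2 : 0 ≤ lc) (h3 : 0 ≤ lV) (i : Fin 3) :
    IsMinC i (combo v la lb lc lV ΔV) (v i) := by
  have h := ((((isMinC_singleton i v).add ((isMinC_seg3 0 1 i (by decide)).smul h0)).add
    ((isMinC_seg3 0 2 i (by decide)).smul h1)).add
    ((isMinC_seg3 1 2 i (by decide)).smul h2)).add ((isMinC_ΔV i).smul h3)
  unfold combo
  convert h using 1
  ring

lemma combo_maxC_pos {la lb lc lV : ℝ} (v : Fin 3 → ℝ)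
    (h0 : 0 ≤ la) (h1 : 0 ≤ lb) (h2 : 0 ≤ lc) (h3 : 0 ≤ lV) (i : Fin 3) :
    IsMaxC i (combo v la lb lc lV ΔV) (v i + ![la + lb + lV, la + lc + lV, lb + lc + lV] i) := by
  have h := ((((isMaxC_singleton i v).add ((isMaxC_seg3 0 1 i (by decide)).smul h0)).add
    ((isMaxC_seg3 0 2 i (by decide)).smul h1)).add
    ((isMaxC_seg3 1 2 i (by decide)).smul h2)).add ((isMaxC_ΔV i).smul h3)
  unfold combo
  convert h using 1
  fin_cases i <;> norm_num [Fin.ext_iff] <;> ring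

lemma combo_sumC_pos {la lb lc lV : ℝ} (v : Fin 3 → ℝ) :
    IsSumC (combo v la lb lc lV ΔV) ((∑ i, v i) + (la + lb + lc + lV)) := by
  have h := ((((isSumC_singleton v).add ((isSumC_seg3 0 1).smul (a := la))).add
    ((isSumC_seg3 0 2).smul (a := lb))).add
    ((isSumC_seg3 1 2).smul (a := lc))).add (isSumC_ΔV.smul (a := lV))
  unfold combo
  convert h using 1
  ring

lemma combo_minC_neg {la lb lc lV : ℝ} (v : Fin 3 → ℝ)
    (h0 : 0 ≤ la) (h1 : 0 ≤ lb) (h2 : 0 ≤ lc) (h3 : 0 ≤ lV) (i : Fin 3) :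
    IsMinC i (combo v la lb lc lV (-ΔV)) (v i - lV) := by
  have h := ((((isMinC_singleton i v).add ((isMinC_seg3 0 1 i (by decide)).smul h0)).add
    ((isMinC_seg3 0 2 i (by decide)).smul h1)).add
    ((isMinC_seg3 1 2 i (by decide)).smul h2)).add (((isMaxC_ΔV i).neg).smul h3)
  unfold combo
  convert h using 1
  ring

lemma combo_maxC_neg {la lb lc lV : ℝ} (v : Fin 3 → ℝ)
    (h0 : 0 ≤ la) (h1 : 0 ≤ lb) (h2 : 0 ≤ lc) (h3 : 0 ≤ lV) (i : Fin 3) :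
    IsMaxC i (combo v la lb lc lV (-ΔV)) (v i + ![la + lb, la + lc, lb + lc] i) := by
  have h := ((((isMaxC_singleton i v).add ((isMaxC_seg3 0 1 i (by decide)).smul h0)).add
    ((isMaxC_seg3 0 2 i (by decide)).smul h1)).add
    ((isMaxC_seg3 1 2 i (by decide)).smul h2)).add (((isMinC_ΔV i).neg).smul h3)
  unfold combo
  convert h using 1
  fin_cases i <;> norm_num [Fin.ext_iff] <;> ring

lemma combo_sumC_neg {la lb lc lV : ℝ} (v : Fin 3 → ℝ) :
    IsSumC (combo v la lb lc lV (-ΔV)) ((∑ i, v i) + (la + lb + lc - lV)) := by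
  have h := ((((isSumC_singleton v).add ((isSumC_seg3 0 1).smul (a := la))).add
    ((isSumC_seg3 0 2).smul (a := lb))).add
    ((isSumC_seg3 1 2).smul (a := lc))).add ((isSumC_ΔV.neg).smul (a := lV))
  unfold combo
  convert h using 1
  ring

lemma convex_seg3 (i j : Fin 3) : Convex ℝ (seg3 i j) := convex_segment _ _

lemma hx_key (v : Fin 3 → ℝ) (lV : ℝ) :
    lV • ΔV + lV • (-ΔV) + ({v} + {lV • one3 - v}) =
      lV • seg3 0 1 + lV • seg3 0 2 + lV • seg3 1 2 := by
  have h1 : ({v} : Set (Fin 3 → ℝ)) + {lV • one3 - v} = {lV • one3} := by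
    rw [Set.singleton_add_singleton]
    congr 1
    abel
  rw [h1, show ({lV • one3} : Set (Fin 3 → ℝ)) = lV • ({one3} : Set (Fin 3 → ℝ)) from
    (Set.smul_set_singleton).symm, ← smul_add, ← smul_add, hexid,
    show ZK3 = seg3 0 1 + seg3 0 2 + seg3 1 2 from rfl, smul_add, smul_add]

lemma combo_deformation_pos {la lb lc lV : ℝ} (v : Fin 3 → ℝ)
    (h0 : 0 ≤ la) (h1 : 0 ≤ lb) (h2 : 0 ≤ lc) (h3 : 0 ≤ lV) :
    ∃ R : Set (Fin 3 → ℝ), IsPolytope R ∧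
      (la + lb + lc + lV + 1) • ZK3 = combo v la lb lc lV ΔV + R := by
  set μ := la + lb + lc + lV + 1 with hμ
  refine ⟨(lb + lc + 1) • seg3 0 1 + (la + lc + 1) • seg3 0 2 + (la + lb + 1) • seg3 1 2 +
    lV • (-ΔV) + {lV • one3 - v}, ?_, ?_⟩
  · exact ((((polytope_seg3 0 1).smul _).add ((polytope_seg3 0 2).smul _)).add
      ((polytope_seg3 1 2).smul _)).add (polytope_ΔV.neg.smul _) |>.add
      (IsPolytope.singleton _)
  · have e01 : μ • seg3 0 1 = la • seg3 0 1 + ((lb + lc + 1) • seg3 0 1 + lV • seg3 0 1) := by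
      rw [← Convex.add_smul (convex_seg3 _ _) (by linarith) h3,
        ← Convex.add_smul (convex_seg3 _ _) h0 (by linarith)]
      congr 1
      ring
    have e02 : μ • seg3 0 2 = lb • seg3 0 2 + ((la + lc + 1) • seg3 0 2 + lV • seg3 0 2) := by
      rw [← Convex.add_smul (convex_seg3 _ _) (by linarith) h3,
        ← Convex.add_smul (convex_seg3 _ _) h1 (by linarith)]
      congr 1
      ring
    have e12 : μ • seg3 1 2 = lc • seg3 1 2 + ((la + lb + 1) • seg3 1 2 + lV • seg3 1 2) := by
      rw [← Convex.add_smul (convex_seg3 _ _) (by linarith) h3,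
        ← Convex.add_smul (convex_seg3 _ _) h2 (by linarith)]
      congr 1
      ring
    calc μ • ZK3 = μ • seg3 0 1 + μ • seg3 0 2 + μ • seg3 1 2 := by
          rw [show ZK3 = seg3 0 1 + seg3 0 2 + seg3 1 2 from rfl, smul_add, smul_add]
      _ = (la • seg3 0 1 + (lb + lc + 1) • seg3 0 1 + lb • seg3 0 2 + (la + lc + 1) • seg3 0 2
            + lc • seg3 1 2 + (la + lb + 1) • seg3 1 2)
          + (lV • seg3 0 1 + lV • seg3 0 2 + lV • seg3 1 2) := by
          rw [e01, e02, e12]; abel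
      _ = (la • seg3 0 1 + (lb + lc + 1) • seg3 0 1 + lb • seg3 0 2 + (la + lc + 1) • seg3 0 2
            + lc • seg3 1 2 + (la + lb + 1) • seg3 1 2)
          + (lV • ΔV + lV • (-ΔV) + ({v} + {lV • one3 - v})) := by rw [hx_key]
      _ = combo v la lb lc lV ΔV + ((lb + lc + 1) • seg3 0 1 + (la + lc + 1) • seg3 0 2 +
            (la + lb + 1) • seg3 1 2 + lV • (-ΔV) + {lV • one3 - v}) := by
          rw [combo]; abel

lemma combo_deformation_neg {la lb lc lV : ℝ} (v : Fin 3 → ℝ)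
    (h0 : 0 ≤ la) (h1 : 0 ≤ lb) (h2 : 0 ≤ lc) (h3 : 0 ≤ lV) :
    ∃ R : Set (Fin 3 → ℝ), IsPolytope R ∧
      (la + lb + lc + lV + 1) • ZK3 = combo v la lb lc lV (-ΔV) + R := by
  set μ := la + lb + lc + lV + 1 with hμ
  refine ⟨(lb + lc + 1) • seg3 0 1 + (la + lc + 1) • seg3 0 2 + (la + lb + 1) • seg3 1 2 +
    lV • ΔV + {lV • one3 - v}, ?_, ?_⟩
  · exact ((((polytope_seg3 0 1).smul _).add ((polytope_seg3 0 2).smul _)).add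
      ((polytope_seg3 1 2).smul _)).add (polytope_ΔV.smul _) |>.add
      (IsPolytope.singleton _)
  · have e01 : μ • seg3 0 1 = la • seg3 0 1 + ((lb + lc + 1) • seg3 0 1 + lV • seg3 0 1) := by
      rw [← Convex.add_smul (convex_seg3 _ _) (by linarith) h3,
        ← Convex.add_smul (convex_seg3 _ _) h0 (by linarith)]
      congr 1
      ring
    have e02 : μ • seg3 0 2 = lb • seg3 0 2 + ((la + lc + 1) • seg3 0 2 + lV • seg3 0 2) := by
      rw [← Convex.add_smul (convex_seg3 _ _) (by linarith) h3,
        ← Convex.add_smul (convex_seg3 _ _) h1 (by linarith)]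
      congr 1
      ring
    have e12 : μ • seg3 1 2 = lc • seg3 1 2 + ((la + lb + 1) • seg3 1 2 + lV • seg3 1 2) := by
      rw [← Convex.add_smul (convex_seg3 _ _) (by linarith) h3,
        ← Convex.add_smul (convex_seg3 _ _) h2 (by linarith)]
      congr 1
      ring
    calc μ • ZK3 = μ • seg3 0 1 + μ • seg3 0 2 + μ • seg3 1 2 := by
          rw [show ZK3 = seg3 0 1 + seg3 0 2 + seg3 1 2 from rfl, smul_add, smul_add]
      _ = (la • seg3 0 1 + (lb + lc + 1) • seg3 0 1 + lb • seg3 0 2 + (la + lc + 1) • seg3 0 2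
            + lc • seg3 1 2 + (la + lb + 1) • seg3 1 2)
          + (lV • seg3 0 1 + lV • seg3 0 2 + lV • seg3 1 2) := by
          rw [e01, e02, e12]; abel
      _ = (la • seg3 0 1 + (lb + lc + 1) • seg3 0 1 + lb • seg3 0 2 + (la + lc + 1) • seg3 0 2
            + lc • seg3 1 2 + (la + lb + 1) • seg3 1 2)
          + (lV • ΔV + lV • (-ΔV) + ({v} + {lV • one3 - v})) := by rw [hx_key]
      _ = combo v la lb lc lV (-ΔV) + ((lb + lc + 1) • seg3 0 1 + (la + lc + 1) • seg3 0 2 +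
            (la + lb + 1) • seg3 1 2 + lV • ΔV + {lV • one3 - v}) := by
          rw [combo]; abel

lemma R_nonempty {P R : Set (Fin 3 → ℝ)} {μ : ℝ} (hsum : μ • ZK3 = P + R) :
    R.Nonempty ∧ P.Nonempty := by
  obtain ⟨z, hz⟩ := ZK3_nonempty.smul_set (a := μ)
  rw [hsum] at hz
  obtain ⟨p, hp, r, hr, _⟩ := hz
  exact ⟨⟨r, hr⟩, ⟨p, hp⟩⟩

lemma part1 (P : Set (Fin 3 → ℝ)) (hPpoly : IsPolytope P) (hPne : P.Nonempty)
    (hPdef : IsDeformation P ZK3) :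
    ∃ (la lb lc lV : ℝ) (v : Fin 3 → ℝ),
      0 ≤ la ∧ 0 ≤ lb ∧ 0 ≤ lc ∧ 0 ≤ lV ∧
      (P = combo v la lb lc lV ΔV ∨ P = combo v la lb lc lV (-ΔV)) := by
  obtain ⟨μ, hμ, R, hRpoly, hsum⟩ := hPdef
  choose a ha using fun i => exists_isMinC hPpoly hPne i
  choose b hb using fun i => exists_isMaxC hPpoly hPne i
  obtain ⟨hRne, -⟩ := R_nonempty hsum
  obtain ⟨r0, hr0⟩ := hRne
  set c : ℝ := 3 * μ - ∑ i, r0 i with hcdef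
  have hc : IsSumC P c := by
    refine ⟨hPne, fun p hp => ?_⟩
    have hmem : p + r0 ∈ μ • ZK3 := hsum ▸ Set.add_mem_add hp hr0
    have h3 := (isSumC_ZK3.smul (a := μ)).2 _ hmem
    have hd : ∑ i, (p + r0) i = (∑ i, p i) + ∑ i, r0 i := by
      simp [Finset.sum_add_distrib]
    rw [hd] at h3
    rw [hcdef]
    linarith
  have hrep := rep_of_summand hμ hPpoly hRpoly hsum ha hb hc
  -- attained points give tightness inequalities
  have hxc : ∀ p ∈ P, p 0 + p 1 + p 2 = c := by
    intro p hp
    rw [← sum3 p (by decide) (by decide) (by decide)]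
    exact hc.2 p hp
  have hab : ∀ i, a i ≤ b i := by
    intro i
    obtain ⟨p, hp, hpe⟩ := (hb i).2
    exact hpe ▸ (ha i).1 p hp
  have t0_0 : b 0 - a 0 ≤ c - (a 0 + a 1 + a 2) := by
    obtain ⟨p, hp, hpe⟩ := (hb 0).2
    have h1 := (ha 1).1 p hp
    have h2 := (ha 2).1 p hp
    have := hxc p hp
    linarith
  have t0_1 : b 1 - a 1 ≤ c - (a 0 + a 1 + a 2) := by
    obtain ⟨p, hp, hpe⟩ := (hb 1).2
    have h0 := (ha 0).1 p hp
    have h2 := (ha 2).1 p hp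
    have := hxc p hp
    linarith
  have t0_2 : b 2 - a 2 ≤ c - (a 0 + a 1 + a 2) := by
    obtain ⟨p, hp, hpe⟩ := (hb 2).2
    have h0 := (ha 0).1 p hp
    have h1 := (ha 1).1 p hp
    have := hxc p hp
    linarith
  have t01 : c - (a 0 + a 1 + a 2) ≤ (b 0 - a 0) + (b 1 - a 1) := by
    obtain ⟨p, hp, hpe⟩ := (ha 2).2
    have h0 := (hb 0).1 p hp
    have h1 := (hb 1).1 p hp
    have := hxc p hp
    linarith
  have t02 : c - (a 0 + a 1 + a 2) ≤ (b 0 - a 0) + (b 2 - a 2) := by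
    obtain ⟨p, hp, hpe⟩ := (ha 1).2
    have h0 := (hb 0).1 p hp
    have h2 := (hb 2).1 p hp
    have := hxc p hp
    linarith
  have t12 : c - (a 0 + a 1 + a 2) ≤ (b 1 - a 1) + (b 2 - a 2) := by
    obtain ⟨p, hp, hpe⟩ := (ha 0).2
    have h1 := (hb 1).1 p hp
    have h2 := (hb 2).1 p hp
    have := hxc p hp
    linarith
  set s : ℝ := c - (a 0 + a 1 + a 2) with hsdef
  set w0 : ℝ := b 0 - a 0 with hw0
  set w1 : ℝ := b 1 - a 1 with hw1
  set w2 : ℝ := b 2 - a 2 with hw2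
  rcases le_total (2 * s) (w0 + w1 + w2) with hcase | hcase
  · -- ΔV case
    set la : ℝ := s - w2 with hla
    set lb : ℝ := s - w1 with hlb
    set lc : ℝ := s - w0 with hlc
    set lV : ℝ := w0 + w1 + w2 - 2 * s with hlV
    have h0 : 0 ≤ la := by have := t0_2; linarith
    have h1 : 0 ≤ lb := by have := t0_1; linarith
    have h2 : 0 ≤ lc := by have := t0_0; linarith
    have h3 : 0 ≤ lV := by linarith
    refine ⟨la, lb, lc, lV, a, h0, h1, h2, h3, Or.inl ?_⟩
    obtain ⟨R', hR'poly, hsum'⟩ := combo_deformation_pos (v := a) h0 h1 h2 h3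
    have hpos : (0:ℝ) < la + lb + lc + lV + 1 := by linarith
    have hTmin : ∀ i, IsMinC i (combo a la lb lc lV ΔV) (a i) :=
      combo_minC_pos a h0 h1 h2 h3
    have hTmax : ∀ i, IsMaxC i (combo a la lb lc lV ΔV) (b i) := by
      intro i
      have h := combo_maxC_pos a h0 h1 h2 h3 i
      convert h using 1
      fin_cases i
      · show b 0 = a 0 + ![la + lb + lV, la + lc + lV, lb + lc + lV] 0
        norm_num
        linarith
      · show b 1 = a 1 + ![la + lb + lV, la + lc + lV, lb + lc + lV] 1
        norm_num
        linarith
      · show b 2 = a 2 + ![la + lb + lV, la + lc + lV, lb + lc + lV] 2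
        norm_num
        have e : ![la + lb + lV, la + lc + lV, lb + lc + lV] 2 = lb + lc + lV := rfl
        linarith
    have hTsum : IsSumC (combo a la lb lc lV ΔV) c := by
      have h := combo_sumC_pos (la := la) (lb := lb) (lc := lc) (lV := lV) a
      convert h using 1
      have : ∑ i, a i = a 0 + a 1 + a 2 := sum3 a (by decide) (by decide) (by decide)
      rw [this]
      linarith
    have hTrep := rep_of_summand hpos (combo_polytope a la lb lc lV polytope_ΔV)
      hR'poly hsum' hTmin hTmax hTsum
    rw [hrep, ← hTrep]
  · -- -ΔV case
    set lV : ℝ := 2 * s - (w0 + w1 + w2) with hlV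
    set la : ℝ := w0 + w1 - s with hla
    set lb : ℝ := w0 + w2 - s with hlb
    set lc : ℝ := w1 + w2 - s with hlc
    have h0 : 0 ≤ la := by have := t01; linarith
    have h1 : 0 ≤ lb := by have := t02; linarith
    have h2 : 0 ≤ lc := by have := t12; linarith
    have h3 : 0 ≤ lV := by linarith
    set v : Fin 3 → ℝ := fun i => a i + lV with hv
    refine ⟨la, lb, lc, lV, v, h0, h1, h2, h3, Or.inr ?_⟩
    obtain ⟨R', hR'poly, hsum'⟩ := combo_deformation_neg (v := v) h0 h1 h2 h3
    have hpos : (0:ℝ) < la + lb + lc + lV + 1 := by linarith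
    have hTmin : ∀ i, IsMinC i (combo v la lb lc lV (-ΔV)) (a i) := by
      intro i
      have h := combo_minC_neg v h0 h1 h2 h3 i
      convert h using 1
      simp only [hv]
      ring
    have hTmax : ∀ i, IsMaxC i (combo v la lb lc lV (-ΔV)) (b i) := by
      intro i
      have h := combo_maxC_neg v h0 h1 h2 h3 i
      convert h using 1
      fin_cases i
      · show b 0 = v 0 + ![la + lb, la + lc, lb + lc] 0
        simp only [hv]
        norm_num
        linarith
      · show b 1 = v 1 + ![la + lb, la + lc, lb + lc] 1
        simp only [hv]
        norm_num
        linarith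
      · show b 2 = v 2 + ![la + lb, la + lc, lb + lc] 2
        simp only [hv]
        norm_num
        have e : ![la + lb, la + lc, lb + lc] 2 = lb + lc := rfl
        linarith
    have hTsum : IsSumC (combo v la lb lc lV (-ΔV)) c := by
      have h := combo_sumC_neg (la := la) (lb := lb) (lc := lc) (lV := lV) v
      convert h using 1
      have : ∑ i, v i = v 0 + v 1 + v 2 := sum3 v (by decide) (by decide) (by decide)
      rw [this]
      simp only [hv]
      linarith
    have hTrep := rep_of_summand hpos (combo_polytope v la lb lc lV polytope_ΔV.neg)
      hR'poly hsum' hTmin hTmax hTsum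
    rw [hrep, ← hTrep]

lemma def_ne {A : Set (Fin 3 → ℝ)} (h : IsDeformation A ZK3) : A.Nonempty := by
  obtain ⟨μ, hμ, R, hR, heq⟩ := h
  exact (R_nonempty heq).2

lemma onRay_self (S : Set (Fin 3 → ℝ)) : OnRay S S :=
  ⟨1, 0, zero_le_one, by rw [one_smul, Set.singleton_zero, zero_add]⟩

lemma combo_to_seg01 {A : Set (Fin 3 → ℝ)} {v : Fin 3 → ℝ} {la lb lc lV : ℝ}
    {T : Set (Fin 3 → ℝ)} (hT : T.Nonempty) (hA : A = combo v la lb lc lV T)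
    (h1 : lb = 0) (h2 : lc = 0) (h3 : lV = 0) : A = {v} + la • seg3 0 1 := by
  rw [hA, combo, h1, h2, h3, addz _ _ hT, addz _ _ (seg3_ne 1 2), addz _ _ (seg3_ne 0 2)]

lemma combo_to_seg02 {A : Set (Fin 3 → ℝ)} {v : Fin 3 → ℝ} {la lb lc lV : ℝ}
    {T : Set (Fin 3 → ℝ)} (hT : T.Nonempty) (hA : A = combo v la lb lc lV T)
    (h1 : la = 0) (h2 : lc = 0) (h3 : lV = 0) : A = {v} + lb • seg3 0 2 := by
  rw [hA, combo, h1, h2, h3, addz _ _ hT, addz _ _ (seg3_ne 1 2), addz _ _ (seg3_ne 0 1)]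

lemma combo_to_seg12 {A : Set (Fin 3 → ℝ)} {v : Fin 3 → ℝ} {la lb lc lV : ℝ}
    {T : Set (Fin 3 → ℝ)} (hT : T.Nonempty) (hA : A = combo v la lb lc lV T)
    (h1 : la = 0) (h2 : lb = 0) (h3 : lV = 0) : A = {v} + lc • seg3 1 2 := by
  rw [hA, combo, h1, h2, h3, addz _ _ hT, addz _ _ (seg3_ne 0 2), addz _ _ (seg3_ne 0 1)]

lemma combo_to_T {A : Set (Fin 3 → ℝ)} {v : Fin 3 → ℝ} {la lb lc lV : ℝ}
    {T : Set (Fin 3 → ℝ)} (hA : A = combo v la lb lc lV T)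
    (h1 : la = 0) (h2 : lb = 0) (h3 : lc = 0) : A = {v} + lV • T := by
  rw [hA, combo, h1, h2, h3, addz _ _ (seg3_ne 1 2), addz _ _ (seg3_ne 0 2),
    addz _ _ (seg3_ne 0 1)]

lemma combo_data {A : Set (Fin 3 → ℝ)} {v : Fin 3 → ℝ} {la lb lc lV : ℝ}
    (h0 : 0 ≤ la) (h1 : 0 ≤ lb) (h2 : 0 ≤ lc) (h3 : 0 ≤ lV)
    (hd : A = combo v la lb lc lV ΔV ∨ A = combo v la lb lc lV (-ΔV)) :
    ∃ M N : Fin 3 → ℝ, ∃ C : ℝ,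
      (∀ i, IsMaxC i A (M i)) ∧ (∀ i, IsMinC i A (N i)) ∧ IsSumC A C ∧
      M 0 - N 0 = la + lb + lV ∧ M 1 - N 1 = la + lc + lV ∧ M 2 - N 2 = lb + lc + lV ∧
      ((C - (N 0 + N 1 + N 2) = la + lb + lc + lV ∧ A = combo v la lb lc lV ΔV) ∨
       (C - (N 0 + N 1 + N 2) = la + lb + lc + 2 * lV ∧ A = combo v la lb lc lV (-ΔV))) := by
  have hv3 : ∑ i, v i = v 0 + v 1 + v 2 := sum3 v (by decide) (by decide) (by decide)
  rcases hd with hA | hA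
  · refine ⟨fun i => v i + ![la + lb + lV, la + lc + lV, lb + lc + lV] i, v,
      (∑ i, v i) + (la + lb + lc + lV), ?_, ?_, ?_, ?_, ?_, ?_, Or.inl ⟨?_, hA⟩⟩
    · intro i; rw [hA]; exact combo_maxC_pos v h0 h1 h2 h3 i
    · intro i; rw [hA]; exact combo_minC_pos v h0 h1 h2 h3 i
    · rw [hA]; exact combo_sumC_pos v
    · norm_num
    · norm_num
    · show v 2 + (lb + lc + lV) - v 2 = lb + lc + lV
      ring
    · rw [hv3]; ring
  · refine ⟨fun i => v i + ![la + lb, la + lc, lb + lc] i, fun i => v i - lV,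
      (∑ i, v i) + (la + lb + lc - lV), ?_, ?_, ?_, ?_, ?_, ?_, Or.inr ⟨?_, hA⟩⟩
    · intro i; rw [hA]; exact combo_maxC_neg v h0 h1 h2 h3 i
    · intro i; rw [hA]; exact combo_minC_neg v h0 h1 h2 h3 i
    · rw [hA]; exact combo_sumC_neg v
    · norm_num
    · norm_num
    · show v 2 + (lb + lc) - (v 2 - lV) = lb + lc + lV
      ring
    · rw [hv3]; ring

lemma deformation_seg01 : IsDeformation (seg3 0 1) ZK3 :=
  ⟨1, one_pos, seg3 0 2 + seg3 1 2, (polytope_seg3 0 2).add (polytope_seg3 1 2), by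
    rw [one_smul]
    exact add_assoc _ _ _⟩

lemma deformation_seg02 : IsDeformation (seg3 0 2) ZK3 :=
  ⟨1, one_pos, seg3 0 1 + seg3 1 2, (polytope_seg3 0 1).add (polytope_seg3 1 2), by
    rw [one_smul]
    show seg3 0 1 + seg3 0 2 + seg3 1 2 = _
    abel⟩

lemma deformation_seg12 : IsDeformation (seg3 1 2) ZK3 :=
  ⟨1, one_pos, seg3 0 1 + seg3 0 2, (polytope_seg3 0 1).add (polytope_seg3 0 2), by
    rw [one_smul]
    show seg3 0 1 + seg3 0 2 + seg3 1 2 = _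
    abel⟩

lemma deformation_ΔV : IsDeformation ΔV ZK3 :=
  ⟨1, one_pos, -ΔV + {one3}, (polytope_ΔV.neg).add (IsPolytope.singleton _), by
    rw [one_smul, ← hexid]
    exact add_assoc _ _ _⟩

lemma deformation_negΔV : IsDeformation (-ΔV) ZK3 :=
  ⟨1, one_pos, ΔV + {one3}, polytope_ΔV.add (IsPolytope.singleton _), by
    rw [one_smul, ← hexid, add_comm ΔV (-ΔV), add_assoc]⟩

lemma ee_ne {i j : Fin 3} (hij : i ≠ j) : ee i ≠ ee j := by
  intro h
  have := congrFun h i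
  rw [ee_apply, ee_apply, if_pos rfl, if_neg hij] at this
  norm_num at this

lemma not_point_seg01 : ¬ ∃ v : Fin 3 → ℝ, seg3 0 1 = {v} := by
  rintro ⟨v, hv⟩
  have h1 : ee 0 ∈ seg3 0 1 := left_mem_segment ℝ _ _
  have h2 : ee 1 ∈ seg3 0 1 := right_mem_segment ℝ _ _
  rw [hv] at h1 h2
  exact ee_ne (show (0 : Fin 3) ≠ 1 by decide) (h1.trans h2.symm)

lemma not_point_seg02 : ¬ ∃ v : Fin 3 → ℝ, seg3 0 2 = {v} := by
  rintro ⟨v, hv⟩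
  have h1 : ee 0 ∈ seg3 0 2 := left_mem_segment ℝ _ _
  have h2 : ee 2 ∈ seg3 0 2 := right_mem_segment ℝ _ _
  rw [hv] at h1 h2
  exact ee_ne (show (0 : Fin 3) ≠ 2 by decide) (h1.trans h2.symm)

lemma not_point_seg12 : ¬ ∃ v : Fin 3 → ℝ, seg3 1 2 = {v} := by
  rintro ⟨v, hv⟩
  have h1 : ee 1 ∈ seg3 1 2 := left_mem_segment ℝ _ _
  have h2 : ee 2 ∈ seg3 1 2 := right_mem_segment ℝ _ _
  rw [hv] at h1 h2
  exact ee_ne (show (1 : Fin 3) ≠ 2 by decide) (h1.trans h2.symm)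

lemma not_point_ΔV : ¬ ∃ v : Fin 3 → ℝ, ΔV = {v} := by
  rintro ⟨v, hv⟩
  have h1 : ee 0 ∈ ΔV := subset_convexHull ℝ _ (Set.mem_insert _ _)
  have h2 : ee 1 ∈ ΔV := subset_convexHull ℝ _ (Set.mem_insert_of_mem _ (Set.mem_insert _ _))
  rw [hv] at h1 h2
  exact ee_ne (show (0 : Fin 3) ≠ 1 by decide) (h1.trans h2.symm)

lemma not_point_negΔV : ¬ ∃ v : Fin 3 → ℝ, -ΔV = {v} := by
  rintro ⟨v, hv⟩
  have h1 : ee 0 ∈ ΔV := subset_convexHull ℝ _ (Set.mem_insert _ _)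
  have h2 : ee 1 ∈ ΔV := subset_convexHull ℝ _ (Set.mem_insert_of_mem _ (Set.mem_insert _ _))
  have h1' : -ee 0 ∈ -ΔV := Set.neg_mem_neg.mpr h1
  have h2' : -ee 1 ∈ -ΔV := Set.neg_mem_neg.mpr h2
  rw [hv] at h1' h2'
  have : -ee 0 = -ee 1 := h1'.trans h2'.symm
  exact ee_ne (show (0 : Fin 3) ≠ 1 by decide) (neg_injective this)

lemma polytope_negΔV : IsPolytope (-ΔV) := polytope_ΔV.neg

lemma extreme_cond_seg01 :
    ∀ A B : Set (Fin 3 → ℝ), IsPolytope A → IsPolytope B →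
      IsDeformation A ZK3 → IsDeformation B ZK3 →
        OnRay (seg3 0 1) (A + B) → OnRay (seg3 0 1) A ∧ OnRay (seg3 0 1) B := by
  intro A B hApoly hBpoly hAdef hBdef hray
  obtain ⟨laA, lbA, lcA, lVA, vA, h0A, h1A, h2A, h3A, hdA⟩ :=
    part1 A hApoly (def_ne hAdef) hAdef
  obtain ⟨laB, lbB, lcB, lVB, vB, h0B, h1B, h2B, h3B, hdB⟩ :=
    part1 B hBpoly (def_ne hBdef) hBdef
  obtain ⟨MA, NA, CA, hMA, hNA, hCA, eA0, eA1, eA2, hcaseA⟩ := combo_data h0A h1A h2A h3A hdA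
  obtain ⟨MB, NB, CB, hMB, hNB, hCB, eB0, eB1, eB2, hcaseB⟩ := combo_data h0B h1B h2B h3B hdB
  obtain ⟨κ, u, hκ, hEq⟩ := hray
  have hmax : MA 2 + MB 2 = u 2 + κ * 0 := by
    refine IsMaxC.unique ((hMA 2).add (hMB 2)) ?_
    rw [hEq]
    have h := (isMaxC_singleton 2 u).add ((isMaxC_seg3 0 1 2 (by decide)).smul hκ)
    rwa [if_neg (by decide : ¬((2 : Fin 3) = 0 ∨ (2 : Fin 3) = 1))] at h
  have hmin : NA 2 + NB 2 = u 2 + κ * 0 := by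
    refine IsMinC.unique ((hNA 2).add (hNB 2)) ?_
    rw [hEq]
    exact (isMinC_singleton 2 u).add ((isMinC_seg3 0 1 2 (by decide)).smul hκ)
  constructor
  · have hb : lbA = 0 := by linarith
    have hc : lcA = 0 := by linarith
    have hV : lVA = 0 := by linarith
    rcases hcaseA with ⟨-, hA⟩ | ⟨-, hA⟩
    · exact ⟨laA, vA, h0A, combo_to_seg01 ΔV_ne hA hb hc hV⟩
    · exact ⟨laA, vA, h0A, combo_to_seg01 negΔV_ne hA hb hc hV⟩
  · have hb : lbB = 0 := by linarith
    have hc : lcB = 0 := by linarith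
    have hV : lVB = 0 := by linarith
    rcases hcaseB with ⟨-, hB⟩ | ⟨-, hB⟩
    · exact ⟨laB, vB, h0B, combo_to_seg01 ΔV_ne hB hb hc hV⟩
    · exact ⟨laB, vB, h0B, combo_to_seg01 negΔV_ne hB hb hc hV⟩

lemma extreme_cond_seg02 :
    ∀ A B : Set (Fin 3 → ℝ), IsPolytope A → IsPolytope B →
      IsDeformation A ZK3 → IsDeformation B ZK3 →
        OnRay (seg3 0 2) (A + B) → OnRay (seg3 0 2) A ∧ OnRay (seg3 0 2) B := by
  intro A B hApoly hBpoly hAdef hBdef hray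
  obtain ⟨laA, lbA, lcA, lVA, vA, h0A, h1A, h2A, h3A, hdA⟩ :=
    part1 A hApoly (def_ne hAdef) hAdef
  obtain ⟨laB, lbB, lcB, lVB, vB, h0B, h1B, h2B, h3B, hdB⟩ :=
    part1 B hBpoly (def_ne hBdef) hBdef
  obtain ⟨MA, NA, CA, hMA, hNA, hCA, eA0, eA1, eA2, hcaseA⟩ := combo_data h0A h1A h2A h3A hdA
  obtain ⟨MB, NB, CB, hMB, hNB, hCB, eB0, eB1, eB2, hcaseB⟩ := combo_data h0B h1B h2B h3B hdB
  obtain ⟨κ, u, hκ, hEq⟩ := hray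
  have hmax : MA 1 + MB 1 = u 1 + κ * 0 := by
    refine IsMaxC.unique ((hMA 1).add (hMB 1)) ?_
    rw [hEq]
    have h := (isMaxC_singleton 1 u).add ((isMaxC_seg3 0 2 1 (by decide)).smul hκ)
    rwa [if_neg (by decide : ¬((1 : Fin 3) = 0 ∨ (1 : Fin 3) = 2))] at h
  have hmin : NA 1 + NB 1 = u 1 + κ * 0 := by
    refine IsMinC.unique ((hNA 1).add (hNB 1)) ?_
    rw [hEq]
    exact (isMinC_singleton 1 u).add ((isMinC_seg3 0 2 1 (by decide)).smul hκ)
  constructor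
  · have ha : laA = 0 := by linarith
    have hc : lcA = 0 := by linarith
    have hV : lVA = 0 := by linarith
    rcases hcaseA with ⟨-, hA⟩ | ⟨-, hA⟩
    · exact ⟨lbA, vA, h1A, combo_to_seg02 ΔV_ne hA ha hc hV⟩
    · exact ⟨lbA, vA, h1A, combo_to_seg02 negΔV_ne hA ha hc hV⟩
  · have ha : laB = 0 := by linarith
    have hc : lcB = 0 := by linarith
    have hV : lVB = 0 := by linarith
    rcases hcaseB with ⟨-, hB⟩ | ⟨-, hB⟩
    · exact ⟨lbB, vB, h1B, combo_to_seg02 ΔV_ne hB ha hc hV⟩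
    · exact ⟨lbB, vB, h1B, combo_to_seg02 negΔV_ne hB ha hc hV⟩

lemma extreme_cond_seg12 :
    ∀ A B : Set (Fin 3 → ℝ), IsPolytope A → IsPolytope B →
      IsDeformation A ZK3 → IsDeformation B ZK3 →
        OnRay (seg3 1 2) (A + B) → OnRay (seg3 1 2) A ∧ OnRay (seg3 1 2) B := by
  intro A B hApoly hBpoly hAdef hBdef hray
  obtain ⟨laA, lbA, lcA, lVA, vA, h0A, h1A, h2A, h3A, hdA⟩ :=
    part1 A hApoly (def_ne hAdef) hAdef
  obtain ⟨laB, lbB, lcB, lVB, vB, h0B, h1B, h2B, h3B, hdB⟩ :=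
    part1 B hBpoly (def_ne hBdef) hBdef
  obtain ⟨MA, NA, CA, hMA, hNA, hCA, eA0, eA1, eA2, hcaseA⟩ := combo_data h0A h1A h2A h3A hdA
  obtain ⟨MB, NB, CB, hMB, hNB, hCB, eB0, eB1, eB2, hcaseB⟩ := combo_data h0B h1B h2B h3B hdB
  obtain ⟨κ, u, hκ, hEq⟩ := hray
  have hmax : MA 0 + MB 0 = u 0 + κ * 0 := by
    refine IsMaxC.unique ((hMA 0).add (hMB 0)) ?_
    rw [hEq]
    have h := (isMaxC_singleton 0 u).add ((isMaxC_seg3 1 2 0 (by decide)).smul hκ)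
    rwa [if_neg (by decide : ¬((0 : Fin 3) = 1 ∨ (0 : Fin 3) = 2))] at h
  have hmin : NA 0 + NB 0 = u 0 + κ * 0 := by
    refine IsMinC.unique ((hNA 0).add (hNB 0)) ?_
    rw [hEq]
    exact (isMinC_singleton 0 u).add ((isMinC_seg3 1 2 0 (by decide)).smul hκ)
  constructor
  · have ha : laA = 0 := by linarith
    have hb : lbA = 0 := by linarith
    have hV : lVA = 0 := by linarith
    rcases hcaseA with ⟨-, hA⟩ | ⟨-, hA⟩
    · exact ⟨lcA, vA, h2A, combo_to_seg12 ΔV_ne hA ha hb hV⟩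
    · exact ⟨lcA, vA, h2A, combo_to_seg12 negΔV_ne hA ha hb hV⟩
  · have ha : laB = 0 := by linarith
    have hb : lbB = 0 := by linarith
    have hV : lVB = 0 := by linarith
    rcases hcaseB with ⟨-, hB⟩ | ⟨-, hB⟩
    · exact ⟨lcB, vB, h2B, combo_to_seg12 ΔV_ne hB ha hb hV⟩
    · exact ⟨lcB, vB, h2B, combo_to_seg12 negΔV_ne hB ha hb hV⟩

lemma extreme_cond_ΔV :
    ∀ A B : Set (Fin 3 → ℝ), IsPolytope A → IsPolytope B →
      IsDeformation A ZK3 → IsDeformation B ZK3 →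
        OnRay ΔV (A + B) → OnRay ΔV A ∧ OnRay ΔV B := by
  intro A B hApoly hBpoly hAdef hBdef hray
  obtain ⟨laA, lbA, lcA, lVA, vA, h0A, h1A, h2A, h3A, hdA⟩ :=
    part1 A hApoly (def_ne hAdef) hAdef
  obtain ⟨laB, lbB, lcB, lVB, vB, h0B, h1B, h2B, h3B, hdB⟩ :=
    part1 B hBpoly (def_ne hBdef) hBdef
  obtain ⟨MA, NA, CA, hMA, hNA, hCA, eA0, eA1, eA2, hcaseA⟩ := combo_data h0A h1A h2A h3A hdA
  obtain ⟨MB, NB, CB, hMB, hNB, hCB, eB0, eB1, eB2, hcaseB⟩ := combo_data h0B h1B h2B h3B hdB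
  obtain ⟨κ, u, hκ, hEq⟩ := hray
  have hmax : ∀ i, MA i + MB i = u i + κ * 1 := by
    intro i
    refine IsMaxC.unique ((hMA i).add (hMB i)) ?_
    rw [hEq]
    exact (isMaxC_singleton i u).add ((isMaxC_ΔV i).smul hκ)
  have hmin : ∀ i, NA i + NB i = u i + κ * 0 := by
    intro i
    refine IsMinC.unique ((hNA i).add (hNB i)) ?_
    rw [hEq]
    exact (isMinC_singleton i u).add ((isMinC_ΔV i).smul hκ)
  have hsum : CA + CB = (∑ i, u i) + κ * 1 := by
    refine IsSumC.unique (hCA.add hCB) ?_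
    rw [hEq]
    exact (isSumC_singleton u).add (isSumC_ΔV.smul (a := κ))
  have hu3 : ∑ i, u i = u 0 + u 1 + u 2 := sum3 u (by decide) (by decide) (by decide)
  have hm0 := hmax 0
  have hm1 := hmax 1
  have hm2 := hmax 2
  have hn0 := hmin 0
  have hn1 := hmin 1
  have hn2 := hmin 2
  constructor
  · rcases hcaseA with ⟨hsA, hA⟩ | ⟨hsA, hA⟩ <;> rcases hcaseB with ⟨hsB, hB⟩ | ⟨hsB, hB⟩
    · exact ⟨lVA, vA, h3A, combo_to_T hA (by linarith) (by linarith) (by linarith)⟩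
    · exact ⟨lVA, vA, h3A, combo_to_T hA (by linarith) (by linarith) (by linarith)⟩
    · refine ⟨0, vA, le_refl 0, ?_⟩
      rw [addz _ _ ΔV_ne]
      have hV : lVA = 0 := by linarith
      rw [combo_to_T hA (by linarith) (by linarith) (by linarith), hV, addz _ _ negΔV_ne]
    · refine ⟨0, vA, le_refl 0, ?_⟩
      rw [addz _ _ ΔV_ne]
      have hV : lVA = 0 := by linarith
      rw [combo_to_T hA (by linarith) (by linarith) (by linarith), hV, addz _ _ negΔV_ne]
  · rcases hcaseA with ⟨hsA, hA⟩ | ⟨hsA, hA⟩ <;> rcases hcaseB with ⟨hsB, hB⟩ | ⟨hsB, hB⟩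
    · exact ⟨lVB, vB, h3B, combo_to_T hB (by linarith) (by linarith) (by linarith)⟩
    · refine ⟨0, vB, le_refl 0, ?_⟩
      rw [addz _ _ ΔV_ne]
      have hV : lVB = 0 := by linarith
      rw [combo_to_T hB (by linarith) (by linarith) (by linarith), hV, addz _ _ negΔV_ne]
    · exact ⟨lVB, vB, h3B, combo_to_T hB (by linarith) (by linarith) (by linarith)⟩
    · refine ⟨0, vB, le_refl 0, ?_⟩
      rw [addz _ _ ΔV_ne]
      have hV : lVB = 0 := by linarith
      rw [combo_to_T hB (by linarith) (by linarith) (by linarith), hV, addz _ _ negΔV_ne]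

lemma extreme_cond_negΔV :
    ∀ A B : Set (Fin 3 → ℝ), IsPolytope A → IsPolytope B →
      IsDeformation A ZK3 → IsDeformation B ZK3 →
        OnRay (-ΔV) (A + B) → OnRay (-ΔV) A ∧ OnRay (-ΔV) B := by
  intro A B hApoly hBpoly hAdef hBdef hray
  obtain ⟨laA, lbA, lcA, lVA, vA, h0A, h1A, h2A, h3A, hdA⟩ :=
    part1 A hApoly (def_ne hAdef) hAdef
  obtain ⟨laB, lbB, lcB, lVB, vB, h0B, h1B, h2B, h3B, hdB⟩ :=
    part1 B hBpoly (def_ne hBdef) hBdef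
  obtain ⟨MA, NA, CA, hMA, hNA, hCA, eA0, eA1, eA2, hcaseA⟩ := combo_data h0A h1A h2A h3A hdA
  obtain ⟨MB, NB, CB, hMB, hNB, hCB, eB0, eB1, eB2, hcaseB⟩ := combo_data h0B h1B h2B h3B hdB
  obtain ⟨κ, u, hκ, hEq⟩ := hray
  have hmax : ∀ i, MA i + MB i = u i + κ * (-0) := by
    intro i
    refine IsMaxC.unique ((hMA i).add (hMB i)) ?_
    rw [hEq]
    exact (isMaxC_singleton i u).add (((isMinC_ΔV i).neg).smul hκ)
  have hmin : ∀ i, NA i + NB i = u i + κ * (-1) := by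
    intro i
    refine IsMinC.unique ((hNA i).add (hNB i)) ?_
    rw [hEq]
    exact (isMinC_singleton i u).add (((isMaxC_ΔV i).neg).smul hκ)
  have hsum : CA + CB = (∑ i, u i) + κ * (-1) := by
    refine IsSumC.unique (hCA.add hCB) ?_
    rw [hEq]
    exact (isSumC_singleton u).add ((isSumC_ΔV.neg).smul (a := κ))
  have hu3 : ∑ i, u i = u 0 + u 1 + u 2 := sum3 u (by decide) (by decide) (by decide)
  have hm0 := hmax 0
  have hm1 := hmax 1
  have hm2 := hmax 2
  have hn0 := hmin 0
  have hn1 := hmin 1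
  have hn2 := hmin 2
  constructor
  · rcases hcaseA with ⟨hsA, hA⟩ | ⟨hsA, hA⟩ <;> rcases hcaseB with ⟨hsB, hB⟩ | ⟨hsB, hB⟩
    · refine ⟨0, vA, le_refl 0, ?_⟩
      rw [addz _ _ negΔV_ne]
      have hV : lVA = 0 := by linarith
      rw [combo_to_T hA (by linarith) (by linarith) (by linarith), hV, addz _ _ ΔV_ne]
    · refine ⟨0, vA, le_refl 0, ?_⟩
      rw [addz _ _ negΔV_ne]
      have hV : lVA = 0 := by linarith
      rw [combo_to_T hA (by linarith) (by linarith) (by linarith), hV, addz _ _ ΔV_ne]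
    · exact ⟨lVA, vA, h3A, combo_to_T hA (by linarith) (by linarith) (by linarith)⟩
    · exact ⟨lVA, vA, h3A, combo_to_T hA (by linarith) (by linarith) (by linarith)⟩
  · rcases hcaseA with ⟨hsA, hA⟩ | ⟨hsA, hA⟩ <;> rcases hcaseB with ⟨hsB, hB⟩ | ⟨hsB, hB⟩
    · refine ⟨0, vB, le_refl 0, ?_⟩
      rw [addz _ _ negΔV_ne]
      have hV : lVB = 0 := by linarith
      rw [combo_to_T hB (by linarith) (by linarith) (by linarith), hV, addz _ _ ΔV_ne]
    · exact ⟨lVB, vB, h3B, combo_to_T hB (by linarith) (by linarith) (by linarith)⟩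
    · refine ⟨0, vB, le_refl 0, ?_⟩
      rw [addz _ _ negΔV_ne]
      have hV : lVB = 0 := by linarith
      rw [combo_to_T hB (by linarith) (by linarith) (by linarith), hV, addz _ _ ΔV_ne]
    · exact ⟨lVB, vB, h3B, combo_to_T hB (by linarith) (by linarith) (by linarith)⟩

lemma ray_nonzero {S A X : Set (Fin 3 → ℝ)} {μ' : ℝ} {v' v : Fin 3 → ℝ} {l : ℝ}
    (hS : S.Nonempty) (hA2 : A = {v'} + μ' • S) (hAs : A = {v} + l • X) (hl : l ≠ 0)
    {x1 x2 : Fin 3 → ℝ} (h1 : x1 ∈ X) (h2 : x2 ∈ X) (h12 : x1 ≠ x2) : μ' ≠ 0 := by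
  intro h0
  rw [h0, addz _ _ hS] at hA2
  have m1 : v + l • x1 ∈ A := hAs ▸ Set.add_mem_add rfl (Set.smul_mem_smul_set h1)
  have m2 : v + l • x2 ∈ A := hAs ▸ Set.add_mem_add rfl (Set.smul_mem_smul_set h2)
  rw [hA2, Set.mem_singleton_iff] at m1 m2
  have : l • x1 = l • x2 := by
    have := m1.trans m2.symm
    exact add_left_cancel this
  exact h12 (smul_right_injective (Fin 3 → ℝ) hl this)

lemma ray_flip {S A X : Set (Fin 3 → ℝ)} {μ' : ℝ} {v' v : Fin 3 → ℝ} {l : ℝ}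
    (hμ : 0 < μ') (hA2 : A = {v'} + μ' • S) (hAs : A = {v} + l • X) :
    S = {(1 / μ') • (v - v')} + ((1 / μ') * l) • X := by
  have e1 : ({-v'} : Set (Fin 3 → ℝ)) + ({v'} + μ' • S) = μ' • S := by
    rw [← add_assoc, Set.singleton_add_singleton, neg_add_cancel, Set.singleton_zero, zero_add]
  have e2 : ({-v'} : Set (Fin 3 → ℝ)) + ({v} + l • X) = {v - v'} + l • X := by
    rw [← add_assoc, Set.singleton_add_singleton, show -v' + v = v - v' from by abel]
  have h5 : μ' • S = {v - v'} + l • X := by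
    calc μ' • S = {-v'} + ({v'} + μ' • S) := e1.symm
      _ = {-v'} + ({v} + l • X) := by rw [← hA2, hAs]
      _ = {v - v'} + l • X := e2
  have h6 : S = (1 / μ') • (μ' • S) := by
    rw [smul_smul, one_div_mul_cancel (ne_of_gt hμ), one_smul]
  rw [h6, h5, smul_add, Set.smul_set_singleton, smul_smul]

lemma part3 (S : Set (Fin 3 → ℝ)) (h : IsExtremeRayGen ZK3 S) :
    ∃ S' ∈ ({seg3 0 1, seg3 0 2, seg3 1 2, ΔV, -ΔV} : Set (Set (Fin 3 → ℝ))),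
      OnRay S' S := by
  obtain ⟨hSpoly, hSdef, hSnp, hSext⟩ := h
  have hSne : S.Nonempty := def_ne hSdef
  obtain ⟨la, lb, lc, lV, v, h0, h1, h2, h3, hd⟩ := part1 S hSpoly hSne hSdef
  -- uniform treatment of the two sign cases
  have main : ∀ T : Set (Fin 3 → ℝ), T.Nonempty → IsPolytope T →
      (∀ (w : Fin 3 → ℝ) (ka kb kc kV : ℝ), 0 ≤ ka → 0 ≤ kb → 0 ≤ kc → 0 ≤ kV →
        ∃ R : Set (Fin 3 → ℝ), IsPolytope R ∧
          (ka + kb + kc + kV + 1) • ZK3 = combo w ka kb kc kV T + R) →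
      S = combo v la lb lc lV T →
      (OnRay T S ∧ lV ≠ 0) ∨ (∃ i j : Fin 3, i ≠ j ∧ OnRay (seg3 i j) S ∧
        ((i, j) = (0, 1) ∨ (i, j) = (0, 2) ∨ (i, j) = (1, 2))) := by
    intro T hTne hTpoly hTdef hS
    by_cases hla : la = 0
    · by_cases hlb : lb = 0
      · by_cases hlc : lc = 0
        · -- S = {v} + lV • T
          have hST : S = {v} + lV • T := combo_to_T hS hla hlb hlc
          left
          refine ⟨⟨lV, v, h3, hST⟩, ?_⟩
          intro hlV
          rw [hlV, addz _ _ hTne] at hST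
          exact hSnp ⟨v, hST⟩
        · -- lc ≠ 0 : split off the seg3 1 2 part
          right
          refine ⟨1, 2, by decide, ?_, by norm_num⟩
          set A : Set (Fin 3 → ℝ) := combo v 0 0 lc 0 ΔV with hAdef'
          set B : Set (Fin 3 → ℝ) := combo 0 la lb 0 lV T with hBdef'
          have hAs : A = {v} + lc • seg3 1 2 := combo_to_seg12 ΔV_ne hAdef' rfl rfl rfl
          have hAB : A + B = S := by
            rw [hS, hAdef', hBdef', combo, combo, combo, Set.singleton_zero,
              Set.zero_smul_set (seg3_ne 0 1), Set.zero_smul_set (seg3_ne 0 2),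
              Set.zero_smul_set (seg3_ne 1 2), Set.zero_smul_set ΔV_ne]
            abel
          obtain ⟨RA, hRA, hRAe⟩ := combo_deformation_pos (v := v) le_rfl le_rfl h2 le_rfl
          obtain ⟨RB, hRB, hRBe⟩ := hTdef 0 la lb 0 lV h0 h1 le_rfl h3
          obtain ⟨hOA, -⟩ := hSext A B (combo_polytope _ _ _ _ _ polytope_ΔV)
            (combo_polytope _ _ _ _ _ hTpoly)
            ⟨0 + 0 + lc + 0 + 1, by linarith, RA, hRA, hRAe⟩
            ⟨la + lb + 0 + lV + 1, by linarith, RB, hRB, hRBe⟩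
            (by rw [hAB]; exact onRay_self S)
          obtain ⟨μ', v', hμ', hA2⟩ := hOA
          have hμne : μ' ≠ 0 := ray_nonzero hSne hA2 hAs hlc
            (left_mem_segment ℝ _ _) (right_mem_segment ℝ _ _)
            (ee_ne (show (1 : Fin 3) ≠ 2 by decide))
          have hμpos : 0 < μ' := lt_of_le_of_ne hμ' (Ne.symm hμne)
          exact ⟨(1 / μ') * lc, (1 / μ') • (v - v'), by positivity,
            ray_flip hμpos hA2 hAs⟩
      · -- lb ≠ 0 : split off the seg3 0 2 part
        right
        refine ⟨0, 2, by decide, ?_, by norm_num⟩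
        set A : Set (Fin 3 → ℝ) := combo v 0 lb 0 0 ΔV with hAdef'
        set B : Set (Fin 3 → ℝ) := combo 0 la 0 lc lV T with hBdef'
        have hAs : A = {v} + lb • seg3 0 2 := combo_to_seg02 ΔV_ne hAdef' rfl rfl rfl
        have hAB : A + B = S := by
          rw [hS, hAdef', hBdef', combo, combo, combo, Set.singleton_zero,
            Set.zero_smul_set (seg3_ne 0 1), Set.zero_smul_set (seg3_ne 0 2),
            Set.zero_smul_set (seg3_ne 1 2), Set.zero_smul_set ΔV_ne]
          abel
        obtain ⟨RA, hRA, hRAe⟩ := combo_deformation_pos (v := v) le_rfl h1 le_rfl le_rfl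
        obtain ⟨RB, hRB, hRBe⟩ := hTdef 0 la 0 lc lV h0 le_rfl h2 h3
        obtain ⟨hOA, -⟩ := hSext A B (combo_polytope _ _ _ _ _ polytope_ΔV)
          (combo_polytope _ _ _ _ _ hTpoly)
          ⟨0 + lb + 0 + 0 + 1, by linarith, RA, hRA, hRAe⟩
          ⟨la + 0 + lc + lV + 1, by linarith, RB, hRB, hRBe⟩
          (by rw [hAB]; exact onRay_self S)
        obtain ⟨μ', v', hμ', hA2⟩ := hOA
        have hμne : μ' ≠ 0 := ray_nonzero hSne hA2 hAs hlb
          (left_mem_segment ℝ _ _) (right_mem_segment ℝ _ _)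
          (ee_ne (show (0 : Fin 3) ≠ 2 by decide))
        have hμpos : 0 < μ' := lt_of_le_of_ne hμ' (Ne.symm hμne)
        exact ⟨(1 / μ') * lb, (1 / μ') • (v - v'), by positivity,
          ray_flip hμpos hA2 hAs⟩
    · -- la ≠ 0 : split off the seg3 0 1 part
      right
      refine ⟨0, 1, by decide, ?_, by norm_num⟩
      set A : Set (Fin 3 → ℝ) := combo v la 0 0 0 ΔV with hAdef'
      set B : Set (Fin 3 → ℝ) := combo 0 0 lb lc lV T with hBdef'
      have hAs : A = {v} + la • seg3 0 1 := combo_to_seg01 ΔV_ne hAdef' rfl rfl rfl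
      have hAB : A + B = S := by
        rw [hS, hAdef', hBdef', combo, combo, combo, Set.singleton_zero,
          Set.zero_smul_set (seg3_ne 0 1), Set.zero_smul_set (seg3_ne 0 2),
          Set.zero_smul_set (seg3_ne 1 2), Set.zero_smul_set ΔV_ne]
        abel
      obtain ⟨RA, hRA, hRAe⟩ := combo_deformation_pos (v := v) h0 le_rfl le_rfl le_rfl
      obtain ⟨RB, hRB, hRBe⟩ := hTdef 0 0 lb lc lV le_rfl h1 h2 h3
      obtain ⟨hOA, -⟩ := hSext A B (combo_polytope _ _ _ _ _ polytope_ΔV)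
        (combo_polytope _ _ _ _ _ hTpoly)
        ⟨la + 0 + 0 + 0 + 1, by linarith, RA, hRA, hRAe⟩
        ⟨0 + lb + lc + lV + 1, by linarith, RB, hRB, hRBe⟩
        (by rw [hAB]; exact onRay_self S)
      obtain ⟨μ', v', hμ', hA2⟩ := hOA
      have hμne : μ' ≠ 0 := ray_nonzero hSne hA2 hAs hla
        (left_mem_segment ℝ _ _) (right_mem_segment ℝ _ _)
        (ee_ne (show (0 : Fin 3) ≠ 1 by decide))
      have hμpos : 0 < μ' := lt_of_le_of_ne hμ' (Ne.symm hμne)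
      exact ⟨(1 / μ') * la, (1 / μ') • (v - v'), by positivity,
        ray_flip hμpos hA2 hAs⟩
  rcases hd with hS | hS
  · rcases main ΔV ΔV_ne polytope_ΔV
        (fun w ka kb kc kV ha hb hc hV => combo_deformation_pos w ha hb hc hV) hS with
      ⟨hray, -⟩ | ⟨i, j, hij, hray, hcase⟩
    · exact ⟨ΔV, by norm_num, hray⟩
    · rcases hcase with he | he | he <;> (rw [Prod.ext_iff] at he; obtain ⟨rfl, rfl⟩ := he)
      · exact ⟨seg3 0 1, by norm_num, hray⟩
      · exact ⟨seg3 0 2, by norm_num, hray⟩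
      · exact ⟨seg3 1 2, by norm_num, hray⟩
  · rcases main (-ΔV) negΔV_ne polytope_negΔV
        (fun w ka kb kc kV ha hb hc hV => combo_deformation_neg w ha hb hc hV) hS with
      ⟨hray, -⟩ | ⟨i, j, hij, hray, hcase⟩
    · exact ⟨-ΔV, by norm_num, hray⟩
    · rcases hcase with he | he | he <;> (rw [Prod.ext_iff] at he; obtain ⟨rfl, rfl⟩ := he)
      · exact ⟨seg3 0 1, by norm_num, hray⟩
      · exact ⟨seg3 0 2, by norm_num, hray⟩
      · exact ⟨seg3 1 2, by norm_num, hray⟩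

end DefConeAux

/-- The deformation cone of the regular hexagon `Z_{K₃}` has exactly 5 extreme rays,
generated by the three segments `Δ_a, Δ_b, Δ_c` and the two triangles `Δ_V, -Δ_V`
(so it is a cone over a bipyramid over a triangle); consequently every deformation of
`Z_{K₃}` is, up to translation, of the form
`λ_a Δ_a + λ_b Δ_b + λ_c Δ_c ± λ_V Δ_V` with all `λ ≥ 0`. -/
theorem defCone_ZK3 :
    (∀ P : Set (Fin 3 → ℝ), IsPolytope P → P.Nonempty → IsDeformation P ZK3 →
      ∃ (la lb lc lV : ℝ) (v : Fin 3 → ℝ),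
        0 ≤ la ∧ 0 ≤ lb ∧ 0 ≤ lc ∧ 0 ≤ lV ∧
        (P = {v} + la • seg3 0 1 + lb • seg3 0 2 + lc • seg3 1 2 + lV • ΔV ∨
         P = {v} + la • seg3 0 1 + lb • seg3 0 2 + lc • seg3 1 2 + lV • (-ΔV))) ∧
    (∀ S ∈ ({seg3 0 1, seg3 0 2, seg3 1 2, ΔV, -ΔV} : Set (Set (Fin 3 → ℝ))),
      IsExtremeRayGen ZK3 S) ∧
    (∀ S : Set (Fin 3 → ℝ), IsExtremeRayGen ZK3 S →
      ∃ S' ∈ ({seg3 0 1, seg3 0 2, seg3 1 2, ΔV, -ΔV} : Set (Set (Fin 3 → ℝ))),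
        OnRay S' S) := by
  refine ⟨?_, ?_, ?_⟩
  · intro P hPoly hne hdef
    obtain ⟨la, lb, lc, lV, v, h0, h1, h2, h3, hd⟩ := DefConeAux.part1 P hPoly hne hdef
    exact ⟨la, lb, lc, lV, v, h0, h1, h2, h3, hd⟩
  · intro S hS
    simp only [Set.mem_insert_iff, Set.mem_singleton_iff] at hS
    rcases hS with rfl | rfl | rfl | rfl | rfl
    · exact ⟨DefConeAux.polytope_seg3 0 1, DefConeAux.deformation_seg01,
        DefConeAux.not_point_seg01, DefConeAux.extreme_cond_seg01⟩
    · exact ⟨DefConeAux.polytope_seg3 0 2, DefConeAux.deformation_seg02,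
        DefConeAux.not_point_seg02, DefConeAux.extreme_cond_seg02⟩
    · exact ⟨DefConeAux.polytope_seg3 1 2, DefConeAux.deformation_seg12,
        DefConeAux.not_point_seg12, DefConeAux.extreme_cond_seg12⟩
    · exact ⟨DefConeAux.polytope_ΔV, DefConeAux.deformation_ΔV,
        DefConeAux.not_point_ΔV, DefConeAux.extreme_cond_ΔV⟩
    · exact ⟨DefConeAux.polytope_negΔV, DefConeAux.deformation_negΔV,
        DefConeAux.not_point_negΔV, DefConeAux.extreme_cond_negΔV⟩
  · exact fun S h => DefConeAux.part3 S h
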